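/- arXiv:2510.05725 — 6 statements merged into one kernel-verified Lean document; each statement's English description precedes it below -/
import Mathlib

section
/- Let X be a finite type, and let p* and p_ref be probability mass functions on X such that p_ref(x) > 0 whenever p*(x) > 0. Let r : X → ℝ take values in {0,1} with r(x) = 1 whenever p*(x) > 0. Let β > 0 and w⁺ ≥ 0, w⁻ ≥ 0, and let q be the GRPO-tilted distribution of p_ref with parameters (β, w⁺, w⁻, r). Then D(p*‖q) ≤ D(p*‖p_ref). -/
open Classical

/-- KL divergence between two pmfs on a finite type,
    `D(p‖q) = ∑_{x : p(x)>0} p(x)·log(p(x)/q(x))`. -/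
noncomputable def klDiv {X : Type*} [Fintype X] (p q : X → ℝ) : ℝ :=
  ∑ x ∈ Finset.univ.filter (fun x => 0 < p x), p x * Real.log (p x / q x)

/-- Reference-KL Tightening: the GRPO-tilted distribution `q` of `p_ref` is at least
    as close (in KL) to `p*` as `p_ref` is, when the reward is binary and equals 1
    on the support of `p*`. -/
theorem stmt_0 {X : Type*} [Fintype X]
    (pstar pref : X → ℝ)
    (hpstar_nonneg : ∀ x, 0 ≤ pstar x) (hpstar_sum : ∑ x, pstar x = 1)
    (hpref_nonneg : ∀ x, 0 ≤ pref x) (hpref_sum : ∑ x, pref x = 1)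
    (habs : ∀ x, 0 < pstar x → 0 < pref x)
    (r : X → ℝ) (hr01 : ∀ x, r x = 0 ∨ r x = 1)
    (hr1 : ∀ x, 0 < pstar x → r x = 1)
    (β wp wm : ℝ) (hβ : 0 < β) (hwp : 0 ≤ wp) (hwm : 0 ≤ wm)
    (Z : ℝ) (hZ : Z = ∑ x, pref x * Real.exp ((1 / β) * (wp * r x - wm * (1 - r x))))
    (q : X → ℝ)
    (hq : ∀ x, q x = pref x * Real.exp ((1 / β) * (wp * r x - wm * (1 - r x))) / Z) :
    klDiv pstar q ≤ klDiv pstar pref := by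
  have hZpos : 0 < Z := by
    subst hZ
    obtain ⟨x0, hx0⟩ : ∃ x, 0 < pref x := by
      by_contra h
      push_neg at h
      have hz : ∑ x, pref x = 0 :=
        Finset.sum_eq_zero (fun x _ => le_antisymm (h x) (hpref_nonneg x))
      rw [hz] at hpref_sum; norm_num at hpref_sum
    exact Finset.sum_pos' (fun x _ => mul_nonneg (hpref_nonneg x) (Real.exp_pos _).le)
      ⟨x0, Finset.mem_univ x0, mul_pos hx0 (Real.exp_pos _)⟩
  have hZle : Z ≤ Real.exp (wp / β) := by
    subst hZ
    calc ∑ x, pref x * Real.exp ((1 / β) * (wp * r x - wm * (1 - r x)))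
        ≤ ∑ x, pref x * Real.exp (wp / β) := by
          apply Finset.sum_le_sum
          intro x _
          apply mul_le_mul_of_nonneg_left _ (hpref_nonneg x)
          apply Real.exp_le_exp.2
          have hβ' : 0 < 1 / β := by positivity
          rcases hr01 x with h | h <;> rw [h] <;>
            [skip; skip] <;>
            · rw [div_eq_mul_inv wp β, ← one_div β, mul_comm wp (1/β)] at *
              nlinarith
      _ = Real.exp (wp / β) := by rw [← Finset.sum_mul, hpref_sum, one_mul]
  have hlogZ : Real.log Z ≤ wp / β := by
    calc Real.log Z ≤ Real.log (Real.exp (wp / β)) := Real.log_le_log hZpos hZle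
      _ = wp / β := Real.log_exp _
  have hsum1 : ∑ x ∈ Finset.univ.filter (fun x => 0 < pstar x), pstar x = 1 := by
    rw [← hpstar_sum]
    apply Finset.sum_subset (Finset.filter_subset _ _)
    intro x _ hx
    simp only [Finset.mem_filter, Finset.mem_univ, true_and, not_lt] at hx
    exact le_antisymm hx (hpstar_nonneg x)
  have key : klDiv pstar q =
      klDiv pstar pref + (Real.log Z - wp / β) := by
    unfold klDiv
    have step : ∑ x ∈ Finset.univ.filter (fun x => 0 < pstar x),
        pstar x * Real.log (pstar x / q x) =
        ∑ x ∈ Finset.univ.filter (fun x => 0 < pstar x),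
        (pstar x * Real.log (pstar x / pref x) + pstar x * (Real.log Z - wp / β)) := by
      apply Finset.sum_congr rfl
      intro x hx
      simp only [Finset.mem_filter, Finset.mem_univ, true_and] at hx
      have hprefx : 0 < pref x := habs x hx
      have hrx : r x = 1 := hr1 x hx
      have hqx : q x = pref x * Real.exp (wp / β) / Z := by
        rw [hq x, hrx]; ring_nf
      have hqpos : 0 < q x := by rw [hqx]; positivity
      rw [hqx, Real.log_div (ne_of_gt hx) (by rw [← hqx]; exact ne_of_gt hqpos),
          Real.log_div (by positivity) (ne_of_gt hZpos),
          Real.log_mul (ne_of_gt hprefx) (Real.exp_ne_zero _), Real.log_exp,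
          Real.log_div (ne_of_gt hx) (ne_of_gt hprefx)]
      ring
    rw [step, Finset.sum_add_distrib, ← Finset.sum_mul, hsum1, one_mul]
  rw [key]
  linarith
end

section
/- Let X be a finite type, p_ref a probability mass function on X, r : X → ℝ with values in {0,1}, and set a = ∑_x p_ref(x)·r(x), assumed to satisfy 0 < a < 1. Let β > 0, w⁺ ≥ 0, w⁻ ≥ 0, and let q be the GRPO-tilted distribution of p_ref with parameters (β, w⁺, w⁻, r). Then ∑_x q(x)·r(x) = a·exp(w⁺/β) / (a·exp(w⁺/β) + (1−a)·exp(−w⁻/β)) = 1 / (1 + ((1−a)/a)·exp(−(w⁺ + w⁻)/β)). -/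
/-- Success probability of the GRPO-tilted distribution depends on the reference only
    through its success probability `a`. -/
theorem stmt_4 {X : Type*} [Fintype X]
    (pref : X → ℝ)
    (hpref_nonneg : ∀ x, 0 ≤ pref x) (hpref_sum : ∑ x, pref x = 1)
    (r : X → ℝ) (hr01 : ∀ x, r x = 0 ∨ r x = 1)
    (a : ℝ) (ha : a = ∑ x, pref x * r x) (ha0 : 0 < a) (ha1 : a < 1)
    (β wp wm : ℝ) (hβ : 0 < β) (hwp : 0 ≤ wp) (hwm : 0 ≤ wm)
    (Z : ℝ) (hZ : Z = ∑ x, pref x * Real.exp ((1 / β) * (wp * r x - wm * (1 - r x))))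
    (q : X → ℝ)
    (hq : ∀ x, q x = pref x * Real.exp ((1 / β) * (wp * r x - wm * (1 - r x))) / Z) :
    (∑ x, q x * r x)
        = a * Real.exp (wp / β) / (a * Real.exp (wp / β) + (1 - a) * Real.exp (-wm / β)) ∧
    (∑ x, q x * r x)
        = 1 / (1 + ((1 - a) / a) * Real.exp (-(wp + wm) / β)) := by
  set E := Real.exp (wp / β) with hE
  set F := Real.exp (-wm / β) with hF
  have hEpos : 0 < E := Real.exp_pos _
  have hFpos : 0 < F := Real.exp_pos _
  have hpt : ∀ x, Real.exp ((1 / β) * (wp * r x - wm * (1 - r x))) = r x * E + (1 - r x) * F := by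
    intro x
    rcases hr01 x with h | h <;> rw [h]
    · rw [show (1 / β) * (wp * 0 - wm * (1 - 0)) = -wm / β by ring]
      rw [hF]; ring
    · rw [show (1 / β) * (wp * 1 - wm * (1 - 1)) = wp / β by ring]
      rw [hE]; ring
  have hZval : Z = a * E + (1 - a) * F := by
    rw [hZ]
    simp only [hpt]
    calc ∑ x, pref x * (r x * E + (1 - r x) * F)
        = ∑ x, ((pref x * r x) * E + (pref x - pref x * r x) * F) := by
          apply Finset.sum_congr rfl; intro x _; ring
      _ = (∑ x, pref x * r x) * E + ((∑ x, pref x) - ∑ x, pref x * r x) * F := by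
          rw [Finset.sum_add_distrib, ← Finset.sum_mul, ← Finset.sum_mul, Finset.sum_sub_distrib]
      _ = a * E + (1 - a) * F := by rw [← ha, hpref_sum]
  have hZpos : 0 < Z := by
    rw [hZval]
    have h1 : 0 < a * E := mul_pos ha0 hEpos
    have h2 : 0 < (1 - a) * F := mul_pos (by linarith) hFpos
    linarith
  have hnum : (∑ x, q x * r x) = a * E / Z := by
    simp only [hq, hpt]
    calc ∑ x, pref x * (r x * E + (1 - r x) * F) / Z * r x
        = ∑ x, pref x * r x * E / Z := by
          apply Finset.sum_congr rfl; intro x _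
          rcases hr01 x with h | h <;> rw [h] <;> ring
      _ = a * E / Z := by
          rw [← Finset.sum_div, ← Finset.sum_mul, ← ha]
  have h1 : (∑ x, q x * r x) = a * E / (a * E + (1 - a) * F) := by rw [hnum, hZval]
  refine ⟨h1, ?_⟩
  rw [h1]
  have hexp : Real.exp (-(wp + wm) / β) = F * E⁻¹ := by
    rw [hE, hF, ← Real.exp_neg, ← Real.exp_add]
    congr 1; field_simp; ring
  rw [hexp]
  have hE0 : E ≠ 0 := ne_of_gt hEpos
  have hZ0 : a * E + (1 - a) * F ≠ 0 := by rw [← hZval]; exact ne_of_gt hZpos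
  have ha0' : a ≠ 0 := ne_of_gt ha0
  field_simp
end

section
/- Let a ∈ (0,1), β > 0, ε > 0, and define h : ℝ → ℝ by h(r) = 1 / (1 + ((1−a)/a)·exp(−(1/β)·(1/√(r·(1−r)+ε)))). Then for every r ∈ [0,1], a < h(r) < 1. Consequently, every fixed point r* ∈ [0,1] of h satisfies r* > a. -/
/-- The GRPO success-probability update map `h` satisfies `a < h(r) < 1` on `[0,1]`;
    consequently every fixed point in `[0,1]` strictly exceeds `a`. -/
theorem stmt_5 (a β ε : ℝ) (ha0 : 0 < a) (ha1 : a < 1) (hβ : 0 < β) (hε : 0 < ε)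
    (h : ℝ → ℝ)
    (hh : ∀ r, h r = 1 / (1 + ((1 - a) / a) *
      Real.exp (-(1 / β) * (1 / Real.sqrt (r * (1 - r) + ε))))) :
    (∀ r ∈ Set.Icc (0 : ℝ) 1, a < h r ∧ h r < 1) ∧
    (∀ rstar ∈ Set.Icc (0 : ℝ) 1, h rstar = rstar → a < rstar) := by
  have key : ∀ r ∈ Set.Icc (0 : ℝ) 1, a < h r ∧ h r < 1 := by
    intro r hr
    obtain ⟨hr0, hr1⟩ := hr
    have hc : 0 < (1 - a) / a := div_pos (by linarith) ha0
    have hs : 0 < r * (1 - r) + ε := by nlinarith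
    have hsqrt : 0 < Real.sqrt (r * (1 - r) + ε) := Real.sqrt_pos.mpr hs
    have hexp_neg : -(1 / β) * (1 / Real.sqrt (r * (1 - r) + ε)) < 0 := by
      have h1 : 0 < 1 / β := by positivity
      have h2 : 0 < 1 / Real.sqrt (r * (1 - r) + ε) := by positivity
      nlinarith
    have hE1 : Real.exp (-(1 / β) * (1 / Real.sqrt (r * (1 - r) + ε))) < 1 :=
      Real.exp_lt_one_iff.mpr hexp_neg
    have hE0 : 0 < Real.exp (-(1 / β) * (1 / Real.sqrt (r * (1 - r) + ε))) :=
      Real.exp_pos _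
    set E := Real.exp (-(1 / β) * (1 / Real.sqrt (r * (1 - r) + ε)))
    have hden : 1 < 1 + (1 - a) / a * E := by nlinarith
    have hden' : 1 + (1 - a) / a * E < 1 / a := by
      have : (1 - a) / a * E < (1 - a) / a := by nlinarith
      have h1a : 1 + (1 - a) / a = 1 / a := by field_simp; ring
      linarith
    rw [hh]
    constructor
    · rw [lt_div_iff₀ (by linarith)]
      calc a * (1 + (1 - a) / a * E) < a * (1 / a) := by
            apply mul_lt_mul_of_pos_left hden' ha0
        _ = 1 := by field_simp
    · rw [div_lt_one (by linarith)]; exact hden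
  refine ⟨key, fun rstar hr hfix => ?_⟩
  have := (key rstar hr).1
  linarith [hfix ▸ this]
end

section
/- Let E be a real normed vector space, T a finite type, L a natural number, c : T → ℝ, φ₀ ∈ E, and G : E → T → Fin L → ℝ such that for each τ ∈ T and n ∈ Fin L, the map φ ↦ G(φ,τ,n) is differentiable at φ₀ and G(φ₀,τ,n) ≠ 0. Define L_out(φ) = ∑_τ c(τ) · ∏_{n} (G(φ,τ,n)/G(φ₀,τ,n)) and L_tok(φ) = ∑_τ c(τ) · ∑_{n} (G(φ,τ,n)/G(φ₀,τ,n)). Then the Fréchet derivatives of L_out and L_tok at φ₀ are equal. -/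
/-- Output–Token level gradient alignment at the first optimization step:
    the Fréchet derivatives at `φ₀` of the output-level objective (product of
    likelihood ratios) and of the token-wise objective (sum of per-step ratios)
    coincide. -/
theorem stmt_10 {E : Type*} [NormedAddCommGroup E] [NormedSpace ℝ E]
    {T : Type*} [Fintype T] (L : ℕ) (c : T → ℝ) (φ₀ : E)
    (G : E → T → Fin L → ℝ)
    (hdiff : ∀ τ n, DifferentiableAt ℝ (fun φ => G φ τ n) φ₀)
    (hne : ∀ τ n, G φ₀ τ n ≠ 0) :
    fderiv ℝ (fun φ => ∑ τ, c τ * ∏ n : Fin L, (G φ τ n / G φ₀ τ n)) φ₀ =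
    fderiv ℝ (fun φ => ∑ τ, c τ * ∑ n : Fin L, (G φ τ n / G φ₀ τ n)) φ₀ := by
  set D : T → Fin L → E →L[ℝ] ℝ :=
    fun τ n => (G φ₀ τ n)⁻¹ • fderiv ℝ (fun φ => G φ τ n) φ₀ with hD
  have hratio : ∀ τ n, HasFDerivAt (fun φ => G φ τ n / G φ₀ τ n) (D τ n) φ₀ := by
    intro τ n
    have h := ((hdiff τ n).hasFDerivAt).const_smul ((G φ₀ τ n)⁻¹)
    simpa [div_eq_inv_mul, smul_eq_mul, Pi.smul_def] using h
  have hprod : ∀ τ : T, HasFDerivAt (fun φ => ∏ n : Fin L, (G φ τ n / G φ₀ τ n))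
      (∑ n : Fin L, D τ n) φ₀ := by
    intro τ
    have h := HasFDerivAt.finset_prod (u := Finset.univ)
      (g := fun n φ => G φ τ n / G φ₀ τ n) (g' := D τ) (x := φ₀)
      (fun n _ => hratio τ n)
    have he : (∑ n : Fin L, (∏ j ∈ Finset.univ.erase n, (G φ₀ τ j / G φ₀ τ j)) • D τ n)
        = ∑ n : Fin L, D τ n := by
      refine Finset.sum_congr rfl fun n _ => ?_
      rw [Finset.prod_congr rfl fun j _ => div_self (hne τ j), Finset.prod_const_one, one_smul]
    rwa [he] at h
  have hsum : ∀ τ : T, HasFDerivAt (fun φ => ∑ n : Fin L, (G φ τ n / G φ₀ τ n))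
      (∑ n : Fin L, D τ n) φ₀ :=
    fun τ => HasFDerivAt.fun_sum (fun n _ => hratio τ n)
  have h1 : HasFDerivAt (fun φ => ∑ τ, c τ * ∏ n : Fin L, (G φ τ n / G φ₀ τ n))
      (∑ τ, c τ • ∑ n : Fin L, D τ n) φ₀ :=
    HasFDerivAt.fun_sum (fun τ _ => by
      simpa [smul_eq_mul, Pi.smul_def] using (hprod τ).const_smul (c τ))
  have h2 : HasFDerivAt (fun φ => ∑ τ, c τ * ∑ n : Fin L, (G φ τ n / G φ₀ τ n))
      (∑ τ, c τ • ∑ n : Fin L, D τ n) φ₀ :=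
    HasFDerivAt.fun_sum (fun τ _ => by
      simpa [smul_eq_mul, Pi.smul_def] using (hsum τ).const_smul (c τ))
  rw [h1.fderiv, h2.fderiv]
end

section
/- Let E be a real normed vector space, S and A finite types, L a natural number, s₀ ∈ S, P : S → A → S → ℝ, r : S → ℝ, φ₀ ∈ E, and g : E → S → A → ℝ such that for each s ∈ S, a ∈ A, the map φ ↦ g(φ,s,a) is differentiable at φ₀. Define value functions recursively by V(0,φ,s) = r(s) and V(k+1,φ,s) = ∑_a g(φ,s,a)·∑_{s'} P(s,a,s')·V(k,φ,s'); define Q(k,s,a) = ∑_{s'} P(s,a,s')·V(k,φ₀,s'); and define state-visitation weights by ρ(0,s) = (1 if s = s₀ else 0) and ρ(k+1,s') = ∑_s ρ(k,s)·∑_a g(φ₀,s,a)·P(s,a,s'). Then the Fréchet derivative at φ₀ of the map φ ↦ V(L,φ,s₀) equals ∑_{k=0}^{L−1} ∑_{s} ρ(k,s) · ∑_a Q(L−1−k, s, a) · D_{s,a}, where D_{s,a} denotes the Fréchet derivative at φ₀ of φ ↦ g(φ,s,a) (equality of continuous linear maps E → ℝ). -/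
open Finset

section Aux

variable {E : Type*} [NormedAddCommGroup E] [NormedSpace ℝ E]
variable {S A : Type*} [Fintype S] [Fintype A] [DecidableEq S]

/-- k-step state distribution starting at `s`, with recursion at the front. -/
def rhoAux (gφ : S → A → ℝ) (P : S → A → S → ℝ) : ℕ → S → S → ℝ
  | 0, s, t => if t = s then 1 else 0
  | (k+1), s, t => ∑ s' : S, (∑ a : A, gφ s a * P s a s') * rhoAux gφ P k s' t

/-- Recursion at the back (Chapman–Kolmogorov). -/
lemma rhoAux_succ_right (gφ : S → A → ℝ) (P : S → A → S → ℝ) (k : ℕ) (s t : S) :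
    rhoAux gφ P (k+1) s t = ∑ u : S, rhoAux gφ P k s u * ∑ a : A, gφ u a * P u a t := by
  induction k generalizing s with
  | zero => simp [rhoAux]
  | succ k ih =>
    show (∑ s' : S, (∑ a : A, gφ s a * P s a s') * rhoAux gφ P (k+1) s' t) = _
    calc (∑ s' : S, (∑ a : A, gφ s a * P s a s') * rhoAux gφ P (k+1) s' t)
        = ∑ s' : S, ∑ u : S, (∑ a : A, gφ s a * P s a s') *
            (rhoAux gφ P k s' u * ∑ a : A, gφ u a * P u a t) := by
          refine Finset.sum_congr rfl fun s' _ => ?_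
          rw [ih, Finset.mul_sum]
      _ = ∑ u : S, ∑ s' : S, (∑ a : A, gφ s a * P s a s') *
            (rhoAux gφ P k s' u * ∑ a : A, gφ u a * P u a t) := Finset.sum_comm
      _ = ∑ u : S, (∑ s' : S, (∑ a : A, gφ s a * P s a s') * rhoAux gφ P k s' u) *
            ∑ a : A, gφ u a * P u a t := by
          refine Finset.sum_congr rfl fun u _ => ?_
          rw [Finset.sum_mul]
          exact Finset.sum_congr rfl fun s' _ => (mul_assoc _ _ _).symm
      _ = _ := rfl

/-- The candidate derivative. -/
noncomputable def Wfun (g : E → S → A → ℝ) (φ₀ : E) (P : S → A → S → ℝ)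
    (Q : ℕ → S → A → ℝ) (k : ℕ) (s : S) : E →L[ℝ] ℝ :=
  ∑ j ∈ Finset.range k, ∑ t : S, rhoAux (g φ₀) P j s t •
    ∑ a : A, Q (k - 1 - j) t a • fderiv ℝ (fun φ => g φ t a) φ₀

lemma Wfun_succ (g : E → S → A → ℝ) (φ₀ : E) (P : S → A → S → ℝ)
    (Q : ℕ → S → A → ℝ) (k : ℕ) (s : S) :
    Wfun g φ₀ P Q (k+1) s =
      (∑ a : A, g φ₀ s a • ∑ s' : S, P s a s' • Wfun g φ₀ P Q k s') +
      ∑ a : A, Q k s a • fderiv ℝ (fun φ => g φ s a) φ₀ := by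
  rw [Wfun, Finset.sum_range_succ']
  congr 1
  · calc (∑ j ∈ Finset.range k, ∑ t : S, rhoAux (g φ₀) P (j+1) s t •
            ∑ a : A, Q (k + 1 - 1 - (j+1)) t a • fderiv ℝ (fun φ => g φ t a) φ₀)
        = ∑ j ∈ Finset.range k, ∑ t : S,
            (∑ s' : S, (∑ a : A, g φ₀ s a * P s a s') * rhoAux (g φ₀) P j s' t) •
            ∑ a : A, Q (k - 1 - j) t a • fderiv ℝ (fun φ => g φ t a) φ₀ := by
          refine Finset.sum_congr rfl fun j _ => Finset.sum_congr rfl fun t _ => ?_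
          have h : k + 1 - 1 - (j+1) = k - 1 - j := by omega
          rw [h]; rfl
      _ = ∑ j ∈ Finset.range k, ∑ t : S, ∑ s' : S,
            ((∑ a : A, g φ₀ s a * P s a s') * rhoAux (g φ₀) P j s' t) •
            ∑ a : A, Q (k - 1 - j) t a • fderiv ℝ (fun φ => g φ t a) φ₀ := by
          exact Finset.sum_congr rfl fun j _ => Finset.sum_congr rfl fun t _ =>
            Finset.sum_smul
      _ = ∑ j ∈ Finset.range k, ∑ s' : S, ∑ t : S,
            ((∑ a : A, g φ₀ s a * P s a s') * rhoAux (g φ₀) P j s' t) •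
            ∑ a : A, Q (k - 1 - j) t a • fderiv ℝ (fun φ => g φ t a) φ₀ :=
          Finset.sum_congr rfl fun j _ => Finset.sum_comm
      _ = ∑ j ∈ Finset.range k, ∑ s' : S, (∑ a : A, g φ₀ s a * P s a s') •
            ∑ t : S, rhoAux (g φ₀) P j s' t •
            ∑ a : A, Q (k - 1 - j) t a • fderiv ℝ (fun φ => g φ t a) φ₀ := by
          refine Finset.sum_congr rfl fun j _ => Finset.sum_congr rfl fun s' _ => ?_
          rw [Finset.smul_sum]
          exact Finset.sum_congr rfl fun t _ => mul_smul _ _ _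
      _ = ∑ s' : S, ∑ j ∈ Finset.range k, (∑ a : A, g φ₀ s a * P s a s') •
            ∑ t : S, rhoAux (g φ₀) P j s' t •
            ∑ a : A, Q (k - 1 - j) t a • fderiv ℝ (fun φ => g φ t a) φ₀ :=
          Finset.sum_comm
      _ = ∑ s' : S, (∑ a : A, g φ₀ s a * P s a s') • Wfun g φ₀ P Q k s' := by
          refine Finset.sum_congr rfl fun s' _ => ?_
          rw [Wfun, Finset.smul_sum]
      _ = ∑ s' : S, ∑ a : A, (g φ₀ s a * P s a s') • Wfun g φ₀ P Q k s' :=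
          Finset.sum_congr rfl fun s' _ => Finset.sum_smul
      _ = ∑ a : A, ∑ s' : S, (g φ₀ s a * P s a s') • Wfun g φ₀ P Q k s' :=
          Finset.sum_comm
      _ = ∑ a : A, g φ₀ s a • ∑ s' : S, P s a s' • Wfun g φ₀ P Q k s' := by
          refine Finset.sum_congr rfl fun a _ => ?_
          rw [Finset.smul_sum]
          exact Finset.sum_congr rfl fun s' _ => mul_smul _ _ _
  · simp [rhoAux]

end Aux

/-- Policy gradient theorem in a sparse-reward, finite-horizon, episodic MDP:
    the Fréchet derivative of `φ ↦ V(L,φ,s₀)` at `φ₀` equals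
    `∑_{k<L} ∑_s ρ(k,s) · ∑_a Q(L−1−k,s,a) · D_{s,a}`. -/
theorem stmt_12 {E : Type*} [NormedAddCommGroup E] [NormedSpace ℝ E]
    {S A : Type*} [Fintype S] [Fintype A] [DecidableEq S]
    (L : ℕ) (s₀ : S) (P : S → A → S → ℝ) (r : S → ℝ) (φ₀ : E)
    (g : E → S → A → ℝ)
    (hdiff : ∀ s a, DifferentiableAt ℝ (fun φ => g φ s a) φ₀)
    (V : ℕ → E → S → ℝ)
    (hV0 : ∀ φ s, V 0 φ s = r s)
    (hVsucc : ∀ k φ s, V (k + 1) φ s = ∑ a, g φ s a * ∑ s', P s a s' * V k φ s')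
    (Q : ℕ → S → A → ℝ)
    (hQ : ∀ k s a, Q k s a = ∑ s', P s a s' * V k φ₀ s')
    (ρ : ℕ → S → ℝ)
    (hρ0 : ∀ s, ρ 0 s = if s = s₀ then 1 else 0)
    (hρsucc : ∀ k s', ρ (k + 1) s' = ∑ s, ρ k s * ∑ a, g φ₀ s a * P s a s') :
    fderiv ℝ (fun φ => V L φ s₀) φ₀ =
      ∑ k ∈ Finset.range L, ∑ s, ρ k s •
        ∑ a, Q (L - 1 - k) s a • fderiv ℝ (fun φ => g φ s a) φ₀ := by
  -- ρ coincides with rhoAux started at s₀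
  have hrho : ∀ k t, ρ k t = rhoAux (g φ₀) P k s₀ t := by
    intro k
    induction k with
    | zero => intro t; rw [hρ0]; rfl
    | succ k ih =>
      intro t
      rw [hρsucc, rhoAux_succ_right]
      exact Finset.sum_congr rfl fun u _ => by rw [ih]
  -- main induction: V k has derivative Wfun k s at φ₀
  have main : ∀ k (s : S), HasFDerivAt (fun φ => V k φ s) (Wfun g φ₀ P Q k s) φ₀ := by
    intro k
    induction k with
    | zero =>
      intro s
      have h : (fun φ => V 0 φ s) = fun _ => r s := funext fun φ => hV0 φ s
      rw [h, Wfun]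
      simpa using hasFDerivAt_const (r s) φ₀
    | succ k ih =>
      intro s
      have h : (fun φ => V (k+1) φ s)
          = fun φ => ∑ a : A, g φ s a * ∑ s' : S, P s a s' * V k φ s' :=
        funext fun φ => hVsucc k φ s
      rw [h, Wfun_succ]
      have hterm : ∀ a : A, HasFDerivAt
          (fun φ => g φ s a * ∑ s' : S, P s a s' * V k φ s')
          (g φ₀ s a • (∑ s' : S, P s a s' • Wfun g φ₀ P Q k s') +
            (∑ s' : S, P s a s' * V k φ₀ s') • fderiv ℝ (fun φ => g φ s a) φ₀) φ₀ := by
        intro a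
        have hinner : HasFDerivAt (fun φ => ∑ s' : S, P s a s' * V k φ s')
            (∑ s' : S, P s a s' • Wfun g φ₀ P Q k s') φ₀ :=
          HasFDerivAt.fun_sum fun s' _ => (ih s').const_mul (P s a s')
        exact ((hdiff s a).hasFDerivAt).mul hinner
      have hsum := HasFDerivAt.fun_sum fun a (_ : a ∈ (Finset.univ : Finset A)) => hterm a
      have heq : (∑ a : A, (g φ₀ s a • (∑ s' : S, P s a s' • Wfun g φ₀ P Q k s') +
            (∑ s' : S, P s a s' * V k φ₀ s') • fderiv ℝ (fun φ => g φ s a) φ₀))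
          = (∑ a : A, g φ₀ s a • ∑ s' : S, P s a s' • Wfun g φ₀ P Q k s') +
            ∑ a : A, Q k s a • fderiv ℝ (fun φ => g φ s a) φ₀ := by
        rw [Finset.sum_add_distrib]
        congr 1
        exact Finset.sum_congr rfl fun a _ => by rw [hQ]
      rw [← heq]
      exact hsum
  rw [(main L s₀).fderiv, Wfun]
  exact Finset.sum_congr rfl fun j _ => Finset.sum_congr rfl fun t _ => by rw [hrho]
end

section
/- Let E be a real normed vector space, T a finite type, L a natural number, C : T → ℝ with C(τ) > 0 for all τ, p_ref : T → ℝ with p_ref(τ) > 0 for all τ, φ₀ ∈ E, and G : E → T → Fin L → ℝ such that for each τ ∈ T and n ∈ Fin L, the map φ ↦ G(φ,τ,n) is differentiable at φ₀ and G(φ₀,τ,n) > 0. Define p(φ,τ) = C(τ)·∏_{n} G(φ,τ,n) and D(φ) = ∑_τ p(φ,τ)·log(p(φ,τ)/p_ref(τ)). Then the Fréchet derivative of D at φ₀ equals ∑_τ p(φ₀,τ)·(1 + log(p(φ₀,τ)/p_ref(τ))) · ∑_{n} (1/G(φ₀,τ,n)) · D_n(τ), where D_n(τ) denotes the Fréchet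 derivative at φ₀ of φ ↦ G(φ,τ,n) (equality of continuous linear maps E → ℝ). -/
/-- Stop-gradient surrogate for the trajectory-wise KL divergence: the Fréchet
    derivative at `φ₀` of `D(φ) = ∑_τ p(φ,τ)·log(p(φ,τ)/p_ref(τ))`, where
    `p(φ,τ) = C(τ)·∏_n G(φ,τ,n)`, equals
    `∑_τ p(φ₀,τ)·(1 + log(p(φ₀,τ)/p_ref(τ))) · ∑_n (1/G(φ₀,τ,n)) · D_n(τ)`. -/
theorem stmt_13 {E : Type*} [NormedAddCommGroup E] [NormedSpace ℝ E]
    {T : Type*} [Fintype T] (L : ℕ) (C : T → ℝ) (hC : ∀ τ, 0 < C τ)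
    (pref : T → ℝ) (hpref : ∀ τ, 0 < pref τ) (φ₀ : E)
    (G : E → T → Fin L → ℝ)
    (hdiff : ∀ τ n, DifferentiableAt ℝ (fun φ => G φ τ n) φ₀)
    (hpos : ∀ τ n, 0 < G φ₀ τ n)
    (p : E → T → ℝ) (hp : ∀ φ τ, p φ τ = C τ * ∏ n : Fin L, G φ τ n)
    (D : E → ℝ) (hD : ∀ φ, D φ = ∑ τ, p φ τ * Real.log (p φ τ / pref τ)) :
    fderiv ℝ D φ₀ =
      ∑ τ, (p φ₀ τ * (1 + Real.log (p φ₀ τ / pref τ))) •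
        ∑ n : Fin L, (G φ₀ τ n)⁻¹ • fderiv ℝ (fun φ => G φ τ n) φ₀ := by
  -- positivity of p
  have hppos : ∀ τ, 0 < p φ₀ τ := fun τ => by
    rw [hp]
    exact mul_pos (hC τ) (Finset.prod_pos fun n _ => hpos τ n)
  -- derivative of the product
  have hprod : ∀ τ, HasFDerivAt (fun φ => p φ τ)
      ((p φ₀ τ) • ∑ n : Fin L, (G φ₀ τ n)⁻¹ • fderiv ℝ (fun φ => G φ τ n) φ₀) φ₀ := by
    intro τ
    have h1 : HasFDerivAt (fun φ => ∏ n : Fin L, G φ τ n)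
        (∑ n : Fin L, (∏ j ∈ Finset.univ.erase n, G φ₀ τ j) •
          fderiv ℝ (fun φ => G φ τ n) φ₀) φ₀ :=
      HasFDerivAt.finset_prod (fun n _ => (hdiff τ n).hasFDerivAt)
    have h2 : HasFDerivAt (fun φ => C τ * ∏ n : Fin L, G φ τ n)
        ((C τ) • ∑ n : Fin L, (∏ j ∈ Finset.univ.erase n, G φ₀ τ j) •
          fderiv ℝ (fun φ => G φ τ n) φ₀) φ₀ := h1.const_mul (C τ)
    have heq : (C τ) • ∑ n : Fin L, (∏ j ∈ Finset.univ.erase n, G φ₀ τ j) •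
          fderiv ℝ (fun φ => G φ τ n) φ₀
        = (p φ₀ τ) • ∑ n : Fin L, (G φ₀ τ n)⁻¹ • fderiv ℝ (fun φ => G φ τ n) φ₀ := by
      rw [hp, Finset.smul_sum, Finset.smul_sum]
      refine Finset.sum_congr rfl fun n _ => ?_
      rw [smul_smul, smul_smul]
      congr 1
      rw [mul_assoc]
      congr 1
      rw [eq_comm, mul_inv_eq_iff_eq_mul₀ (hpos τ n).ne', mul_comm,
        Finset.mul_prod_erase _ _ (Finset.mem_univ n)]
    rw [heq] at h2
    exact h2.congr_of_eventuallyEq (by filter_upwards with φ; rw [hp])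
  -- derivative of each summand
  have hterm : ∀ τ, HasFDerivAt (fun φ => p φ τ * Real.log (p φ τ / pref τ))
      ((p φ₀ τ * (1 + Real.log (p φ₀ τ / pref τ))) •
        ∑ n : Fin L, (G φ₀ τ n)⁻¹ • fderiv ℝ (fun φ => G φ τ n) φ₀) φ₀ := by
    intro τ
    have hx := hppos τ
    have hc := hpref τ
    -- derivative of x ↦ x * log (x / c) at p φ₀ τ
    have hdiv : HasDerivAt (fun x : ℝ => x / pref τ) (pref τ)⁻¹ (p φ₀ τ) := by
      simpa using (hasDerivAt_id (p φ₀ τ)).div_const (pref τ)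
    have hlog : HasDerivAt (fun x : ℝ => Real.log (x / pref τ))
        ((p φ₀ τ / pref τ)⁻¹ * (pref τ)⁻¹) (p φ₀ τ) :=
      by have := (Real.hasDerivAt_log (by positivity : (0:ℝ) < p φ₀ τ / pref τ).ne').comp (p φ₀ τ) hdiv; exact this
    have hg : HasDerivAt (fun x : ℝ => x * Real.log (x / pref τ))
        (1 + Real.log (p φ₀ τ / pref τ)) (p φ₀ τ) := by
      have := (hasDerivAt_id (p φ₀ τ)).mul hlog
      refine this.congr_deriv ?_
      simp only [id]
      field_simp
      ring
    have := hg.comp_hasFDerivAt φ₀ (hprod τ)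
    rw [smul_smul] at this
    rw [mul_comm (p φ₀ τ)]
    exact this
  have hsum : HasFDerivAt D
      (∑ τ, (p φ₀ τ * (1 + Real.log (p φ₀ τ / pref τ))) •
        ∑ n : Fin L, (G φ₀ τ n)⁻¹ • fderiv ℝ (fun φ => G φ τ n) φ₀) φ₀ := by
    have := HasFDerivAt.fun_sum (fun τ (_ : τ ∈ Finset.univ) => hterm τ)
    exact this.congr_of_eventuallyEq (by filter_upwards with φ; rw [hD])
  exact hsum.fderiv
end
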